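/- A point p* ∈ 𝒫 is a Nash equilibrium of the game 𝒢 if and only if p*_q = WF_q(p*_{-q}) for every q ∈ {1,…,Q}, i.e. if and only if each p*_q equals the Euclidean projection of −insr_q(p*_{-q}) onto 𝒫_q. -/

import Mathlib

/-!
Against the fixed interference `a = insr_q(p*_{-q}) > 0`, the rate of user `q` is, up to the
factor `1/N` and an additive constant, the strictly concave utility `x ↦ ∑ k, log (a k + x k)`.
The projection `x` of `-a` onto `𝒫_q` has a water level `c`: `x k + a k ≤ c` on carriers in use
and `≥ c` on carriers below their cap, since otherwise shifting power between two carriers would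
bring `x` closer to `-a`. Against that level the derivative `∑ k, (y k - x k) / (a k + x k)` of the
utility is `≤ 0` in every feasible direction, so by strict concavity of `log` the projection is the
unique best response of user `q` to `p*_{-q}`.
-/

open Finset
open scoped Classical

noncomputable section

/-- Squared Euclidean distance between two vectors of `ℝ^N`. -/
def dsq {N : ℕ} (x y : Fin N → ℝ) : ℝ := ∑ k, (x k - y k) ^ 2

/-- The admissible strategy set with per-carrier caps `pmax`. -/
def stratSet {N : ℕ} (pmax : Fin N → ℝ) : Set (Fin N → ℝ) :=
  {p | (1 / (N : ℝ)) * ∑ k, p k = 1 ∧ ∀ k, 0 ≤ p k ∧ p k ≤ pmax k}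

/-- `x` is a Euclidean projection of `z` onto `S` (a minimizer of the Euclidean distance). -/
def IsProjOn {N : ℕ} (S : Set (Fin N → ℝ)) (z x : Fin N → ℝ) : Prop :=
  x ∈ S ∧ ∀ y ∈ S, dsq x z ≤ dsq y z

/-- The interference-plus-noise-to-signal vector `insr_q(p_{-q})`
(it only depends on the components `p r` for `r ≠ q`). -/
def insr {N Q : ℕ} (H : Fin Q → Fin Q → Fin N → ℝ) (Γ : Fin Q → ℝ)
    (q : Fin Q) (p : Fin Q → Fin N → ℝ) : Fin N → ℝ :=
  fun k => Γ q * (1 + ∑ r ∈ Finset.univ.erase q, H r q k * p r k) / H q q k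

/-- `WF` is a waterfilling operator: whenever the other users' strategies are feasible,
`WF q p` is the Euclidean projection of `-insr_q(p_{-q})` onto user `q`'s strategy set. -/
def IsWF {N Q : ℕ} (H : Fin Q → Fin Q → Fin N → ℝ) (Γ : Fin Q → ℝ)
    (pmax : Fin Q → Fin N → ℝ)
    (WF : Fin Q → (Fin Q → Fin N → ℝ) → Fin N → ℝ) : Prop :=
  ∀ q (p : Fin Q → Fin N → ℝ), (∀ r, r ≠ q → p r ∈ stratSet (pmax r)) →
    IsProjOn (stratSet (pmax q)) (fun k => -insr H Γ q p k) (WF q p)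

/-- The rate `R_q(p)` of user `q`. -/
def rate {N Q : ℕ} (H : Fin Q → Fin Q → Fin N → ℝ) (Γ : Fin Q → ℝ)
    (q : Fin Q) (p : Fin Q → Fin N → ℝ) : ℝ :=
  (1 / (N : ℝ)) * ∑ k, Real.log (1 + H q q k * p q k /
      (Γ q * (1 + ∑ r ∈ Finset.univ.erase q, H r q k * p r k)))

/-- `pstar` is a Nash equilibrium of the rate game `𝒢`. -/
def IsNE {N Q : ℕ} (H : Fin Q → Fin Q → Fin N → ℝ) (Γ : Fin Q → ℝ)
    (pmax : Fin Q → Fin N → ℝ) (pstar : Fin Q → Fin N → ℝ) : Prop :=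
  (∀ q, pstar q ∈ stratSet (pmax q)) ∧
    ∀ q, ∀ x ∈ stratSet (pmax q),
      rate H Γ q (Function.update pstar q x) ≤ rate H Γ q pstar

/-- The set `D_q` of carriers that user `q` may use in some best response. -/
def Dset {N Q : ℕ} (pmax : Fin Q → Fin N → ℝ)
    (WF : Fin Q → (Fin Q → Fin N → ℝ) → Fin N → ℝ) (q : Fin Q) : Set (Fin N) :=
  {k | ∃ p : Fin Q → Fin N → ℝ,
    (∀ r, r ≠ q → p r ∈ stratSet (pmax r)) ∧ WF q p k ≠ 0}

/-- `max_{k ∈ D_q ∩ D_r} |H_rq(k)|² / |H_qq(k)|²`, with the convention that it is `0`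
when `D_q ∩ D_r = ∅` (via `Real.sSup_empty`). -/
def maxRatio {N Q : ℕ} (H : Fin Q → Fin Q → Fin N → ℝ) (pmax : Fin Q → Fin N → ℝ)
    (WF : Fin Q → (Fin Q → Fin N → ℝ) → Fin N → ℝ) (q r : Fin Q) : ℝ :=
  sSup {x : ℝ | ∃ k : Fin N,
    (k ∈ Dset pmax WF q ∧ k ∈ Dset pmax WF r) ∧ x = H r q k / H q q k}

/-- The matrix `H^max`. -/
def Hmax {N Q : ℕ} (H : Fin Q → Fin Q → Fin N → ℝ) (Γ : Fin Q → ℝ)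
    (pmax : Fin Q → Fin N → ℝ)
    (WF : Fin Q → (Fin Q → Fin N → ℝ) → Fin N → ℝ) : Matrix (Fin Q) (Fin Q) ℝ :=
  Matrix.of fun q r => if q = r then 0 else Γ q * maxRatio H pmax WF q r

/-- The matrix `H(k)`. -/
def Hmat {N Q : ℕ} (H : Fin Q → Fin Q → Fin N → ℝ) (Γ : Fin Q → ℝ)
    (pmax : Fin Q → Fin N → ℝ)
    (WF : Fin Q → (Fin Q → Fin N → ℝ) → Fin N → ℝ) (k : Fin N) :
    Matrix (Fin Q) (Fin Q) ℝ :=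
  Matrix.of fun q r =>
    if q ≠ r ∧ k ∈ Dset pmax WF q ∧ k ∈ Dset pmax WF r then
      Γ q * H r q k / H q q k
    else 0

/-- The spectral radius of a real square matrix: the maximum modulus of its complex
eigenvalues (the roots of its characteristic polynomial over `ℂ`). -/
def specRad {n : ℕ} (A : Matrix (Fin n) (Fin n) ℝ) : ℝ :=
  sSup {x : ℝ | ∃ μ : ℂ,
    ((A.map (fun a => (a : ℂ))).charpoly).IsRoot μ ∧ x = ‖μ‖}

/-- The spectral norm `‖A‖₂ = ρ(AᵀA)^{1/2}` of a real square matrix. -/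
def specNorm {n : ℕ} (A : Matrix (Fin n) (Fin n) ℝ) : ℝ :=
  Real.sqrt (specRad (A.transpose * A))

/-- Euclidean distance between strategy profiles, viewed as vectors of `ℝ^{QN}`. -/
def profDist {N Q : ℕ} (p p' : Fin Q → Fin N → ℝ) : ℝ :=
  Real.sqrt (∑ q, ∑ k, (p q k - p' q k) ^ 2)

/-- The effective strategy set `𝒫_q^eff`. -/
def effSet {N Q : ℕ} (pmax : Fin Q → Fin N → ℝ)
    (WF : Fin Q → (Fin Q → Fin N → ℝ) → Fin N → ℝ) (q : Fin Q) : Set (Fin N → ℝ) :=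
  {p | p ∈ stratSet (pmax q) ∧ ∀ k, k ∉ Dset pmax WF q → p k = 0}

/-- The gradient `∇_q R_q(p)` of the rate of user `q` with respect to its own powers. -/
def gradR {N Q : ℕ} (H : Fin Q → Fin Q → Fin N → ℝ) (Γ : Fin Q → ℝ)
    (q : Fin Q) (p : Fin Q → Fin N → ℝ) : Fin N → ℝ :=
  fun k => (1 / (N : ℝ)) * H q q k /
    (Γ q * (1 + ∑ r ∈ Finset.univ.erase q, H r q k * p r k) + H q q k * p q k)

/-- `x` is a projection of `z` onto `S` with respect to the quadratic form of the
(symmetric positive definite) matrix `G`, i.e. a minimizer of `(x-z)ᵀ G (x-z)` over `S`. -/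
def IsGProj {N : ℕ} (G : Matrix (Fin N) (Fin N) ℝ) (S : Set (Fin N → ℝ))
    (z x : Fin N → ℝ) : Prop :=
  x ∈ S ∧ ∀ y ∈ S,
    dotProduct (fun i => x i - z i) (G.mulVec (fun i => x i - z i)) ≤
      dotProduct (fun i => y i - z i) (G.mulVec (fun i => y i - z i))

theorem Real.log_sub_log_le_div {u v : ℝ} (hu : 0 < u) (hv : 0 < v) :
    Real.log v - Real.log u ≤ (v - u) / u := by
  rw [← Real.log_div hv.ne' hu.ne', sub_div, div_self hu.ne']
  exact Real.log_le_sub_one_of_pos (div_pos hv hu)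

theorem Real.log_sub_log_lt_div {u v : ℝ} (hu : 0 < u) (hv : 0 < v) (hne : v ≠ u) :
    Real.log v - Real.log u < (v - u) / u := by
  rw [← Real.log_div hv.ne' hu.ne', sub_div, div_self hu.ne']
  exact Real.log_lt_sub_one_of_pos (div_pos hv hu) (by rwa [Ne, div_eq_one_iff_eq hu.ne'])

section Projection

variable {N : ℕ}

theorem convex_stratSet (pm : Fin N → ℝ) : Convex ℝ (stratSet pm) := by
  rintro x ⟨hxs, hxb⟩ y ⟨hys, hyb⟩ s t hs ht hst
  refine ⟨?_, fun k => ?_⟩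
  · simp only [Pi.add_apply, Pi.smul_apply, smul_eq_mul, Finset.sum_add_distrib,
      ← Finset.mul_sum]
    linear_combination s * hxs + t * hys + hst
  · simp only [Pi.add_apply, Pi.smul_apply, smul_eq_mul]
    obtain ⟨hx0, hxm⟩ := hxb k
    obtain ⟨hy0, hym⟩ := hyb k
    constructor <;> nlinarith

theorem sum_eq_sum_of_mem_stratSet {pm x y : Fin N → ℝ} (hx : x ∈ stratSet pm)
    (hy : y ∈ stratSet pm) : ∑ k, x k = ∑ k, y k :=
  mul_left_cancel₀ (left_ne_zero_of_mul_eq_one hx.1) (hx.1.trans hy.1.symm)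

theorem exists_pos_of_mem_stratSet {pm x : Fin N → ℝ} (hx : x ∈ stratSet pm) :
    ∃ k, 0 < x k := by
  obtain ⟨k, -, hk⟩ := Finset.exists_ne_zero_of_sum_ne_zero (right_ne_zero_of_mul_eq_one hx.1)
  exact ⟨k, lt_of_le_of_ne (hx.2 k).1 (Ne.symm hk)⟩

theorem IsProjOn.sum_mul_sub_nonneg {S : Set (Fin N → ℝ)} (hS : Convex ℝ S)
    {z x y : Fin N → ℝ} (hx : IsProjOn S z x) (hy : y ∈ S) :
    0 ≤ ∑ k, (x k - z k) * (y k - x k) := by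
  set A := ∑ k, (x k - z k) * (y k - x k)
  set B := ∑ k, (y k - x k) ^ 2
  have hsegment : ∀ t ∈ Set.Ioc (0 : ℝ) 1, 0 ≤ 2 * A + t * B := by
    rintro t ⟨ht0, ht1⟩
    have hmin := hx.2 _ (hS.add_smul_sub_mem hx.1 hy ⟨ht0.le, ht1⟩)
    have hexpand : dsq (x + t • (y - x)) z = dsq x z + t * (2 * A + t * B) := by
      simp only [dsq, A, B, Pi.add_apply, Pi.smul_apply, Pi.sub_apply, smul_eq_mul,
        Finset.mul_sum, ← Finset.sum_add_distrib]
      exact Finset.sum_congr rfl fun k _ => by ring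
    rw [hexpand] at hmin
    exact nonneg_of_mul_nonneg_right (by linarith) ht0
  have hlim : Filter.Tendsto (fun t : ℝ => 2 * A + t * B) (nhdsWithin 0 (Set.Ioi 0))
      (nhds (2 * A)) := by
    have : Continuous (fun t : ℝ => 2 * A + t * B) := by fun_prop
    simpa using (this.tendsto 0).mono_left nhdsWithin_le_nhds
  have := ge_of_tendsto hlim (Filter.eventually_of_mem (Ioc_mem_nhdsGT one_pos) hsegment)
  linarith

theorem IsProjOn.add_le_add_of_pos_of_lt {pm a x : Fin N → ℝ}
    (hx : IsProjOn (stratSet pm) (fun k => -a k) x) {i j : Fin N} (hij : i ≠ j)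
    (hi : 0 < x i) (hj : x j < pm j) : x i + a i ≤ x j + a j := by
  set t := min (x i) (pm j - x j)
  have ht : 0 < t := lt_min hi (sub_pos.2 hj)
  set y := x + Pi.single j t - Pi.single i t
  have hy : y ∈ stratSet pm := by
    refine ⟨?_, fun k => ?_⟩
    · simpa [y, Finset.sum_add_distrib, Finset.sum_sub_distrib] using hx.1.1
    · have hk := hx.1.2 k
      have hti : t ≤ x i := min_le_left _ _
      have htj : t ≤ pm j - x j := min_le_right _ _
      by_cases hkj : k = j
      · subst hkj
        simp only [y, Pi.sub_apply, Pi.add_apply, Pi.single_eq_same, Pi.single_eq_of_ne hij.symm,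
          sub_zero]
        constructor <;> linarith
      · by_cases hki : k = i
        · subst hki
          simp only [y, Pi.sub_apply, Pi.add_apply, Pi.single_eq_same, Pi.single_eq_of_ne hkj,
            add_zero]
          constructor <;> linarith
        · simpa [y, hkj, hki] using hk
  have hvi := IsProjOn.sum_mul_sub_nonneg (convex_stratSet pm) hx hy
  have hsum : ∑ k, (x k - -a k) * (y k - x k) = t * ((x j + a j) - (x i + a i)) := by
    have hstep k :
        y k - x k = (Pi.single j t : Fin N → ℝ) k - (Pi.single i t : Fin N → ℝ) k := by
      simp only [y, Pi.add_apply, Pi.sub_apply]; ring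
    simp only [hstep, mul_sub, Finset.sum_sub_distrib, Pi.single_apply, mul_ite, mul_zero,
      Finset.sum_ite_eq', Finset.mem_univ, if_true]
    ring
  rw [hsum] at hvi
  nlinarith

theorem IsProjOn.exists_waterLevel {pm a x : Fin N → ℝ} (ha : ∀ k, 0 < a k)
    (hx : IsProjOn (stratSet pm) (fun k => -a k) x) :
    ∃ c, 0 < c ∧ ∀ k, (0 < x k → x k + a k ≤ c) ∧ (x k < pm k → c ≤ x k + a k) := by
  have hsupp : (Finset.univ.filter fun k => 0 < x k).Nonempty := by
    obtain ⟨k, hk⟩ := exists_pos_of_mem_stratSet hx.1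
    exact ⟨k, by simpa using hk⟩
  obtain ⟨i, hi, hmax⟩ := Finset.exists_max_image _ (fun k => x k + a k) hsupp
  rw [Finset.mem_filter] at hi
  refine ⟨x i + a i, by linarith [ha i], fun k => ⟨fun hk => hmax k (by simpa using hk),
    fun hk => ?_⟩⟩
  rcases eq_or_ne i k with rfl | hik
  · exact le_rfl
  · exact hx.add_le_add_of_pos_of_lt hik hi.2 hk

theorem one_div_sub_one_div_mul_sub_nonpos {a x y m c : ℝ} (hc : 0 < c) (hax : 0 < a + x)
    (hx : 0 ≤ x ∧ x ≤ m) (hy : 0 ≤ y ∧ y ≤ m)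
    (hlow : 0 < x → x + a ≤ c) (hhigh : x < m → c ≤ x + a) :
    (1 / (a + x) - 1 / c) * (y - x) ≤ 0 := by
  rcases lt_trichotomy (a + x) c with hlt | heq | hgt
  · have hxm : x = m := by by_contra h; linarith [hhigh (lt_of_le_of_ne hx.2 h)]
    have := one_div_lt_one_div_of_lt hax hlt
    exact mul_nonpos_of_nonneg_of_nonpos (by linarith) (by linarith)
  · simp [heq]
  · have hx0 : x = 0 := by by_contra h; linarith [hlow (lt_of_le_of_ne hx.1 (Ne.symm h))]
    have := one_div_lt_one_div_of_lt hc hgt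
    exact mul_nonpos_of_nonpos_of_nonneg (by linarith) (by linarith)

theorem IsProjOn.sum_sub_div_nonpos {pm a x y : Fin N → ℝ} (ha : ∀ k, 0 < a k)
    (hx : IsProjOn (stratSet pm) (fun k => -a k) x) (hy : y ∈ stratSet pm) :
    ∑ k, (y k - x k) / (a k + x k) ≤ 0 := by
  obtain ⟨c, hc, hlevel⟩ := hx.exists_waterLevel ha
  have hax k : 0 < a k + x k := by linarith [ha k, (hx.1.2 k).1]
  have hbalance : ∑ k, 1 / c * (y k - x k) = 0 := by
    rw [← Finset.mul_sum, Finset.sum_sub_distrib, sum_eq_sum_of_mem_stratSet hy hx.1, sub_self,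
      mul_zero]
  calc ∑ k, (y k - x k) / (a k + x k)
      = ∑ k, (1 / (a k + x k) - 1 / c) * (y k - x k) + ∑ k, 1 / c * (y k - x k) := by
        rw [← Finset.sum_add_distrib]
        exact Finset.sum_congr rfl fun k _ => by ring
    _ ≤ 0 := by
        rw [hbalance, add_zero]
        exact Finset.sum_nonpos fun k _ => one_div_sub_one_div_mul_sub_nonpos hc (hax k)
          (hx.1.2 k) (hy.2 k) (hlevel k).1 (hlevel k).2

theorem IsProjOn.sum_log_add_lt {pm a x y : Fin N → ℝ} (ha : ∀ k, 0 < a k)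
    (hx : IsProjOn (stratSet pm) (fun k => -a k) x) (hy : y ∈ stratSet pm) (hne : y ≠ x) :
    ∑ k, Real.log (a k + y k) < ∑ k, Real.log (a k + x k) := by
  obtain ⟨k₀, hk₀⟩ := Function.ne_iff.1 hne
  have hax k : 0 < a k + x k := by linarith [ha k, (hx.1.2 k).1]
  have hay k : 0 < a k + y k := by linarith [ha k, (hy.2 k).1]
  have hconcave : ∑ k, (Real.log (a k + y k) - Real.log (a k + x k))
      < ∑ k, (a k + y k - (a k + x k)) / (a k + x k) :=
    Finset.sum_lt_sum (fun k _ => Real.log_sub_log_le_div (hax k) (hay k))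
      ⟨k₀, Finset.mem_univ _, Real.log_sub_log_lt_div (hax k₀) (hay k₀) (by simpa using hk₀)⟩
  simp only [Finset.sum_sub_distrib, add_sub_add_left_eq_sub] at hconcave
  linarith [hx.sum_sub_div_nonpos ha hy]

theorem IsProjOn.sum_log_add_le {pm a x y : Fin N → ℝ} (ha : ∀ k, 0 < a k)
    (hx : IsProjOn (stratSet pm) (fun k => -a k) x) (hy : y ∈ stratSet pm) :
    ∑ k, Real.log (a k + y k) ≤ ∑ k, Real.log (a k + x k) := by
  rcases eq_or_ne y x with rfl | hne
  · exact le_rfl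
  · exact (hx.sum_log_add_lt ha hy hne).le

end Projection

section Rate

variable {N Q : ℕ} {H : Fin Q → Fin Q → Fin N → ℝ} {Γ : Fin Q → ℝ}

theorem insr_pos (hH : ∀ r q k, 0 ≤ H r q k) (hHqq : ∀ q k, 0 < H q q k) (hΓ : ∀ q, 0 < Γ q)
    {p : Fin Q → Fin N → ℝ} (hp : ∀ r k, 0 ≤ p r k) (q : Fin Q) (k : Fin N) :
    0 < insr H Γ q p k := by
  have : 0 ≤ ∑ r ∈ Finset.univ.erase q, H r q k * p r k :=
    Finset.sum_nonneg fun r _ => mul_nonneg (hH r q k) (hp r k)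
  exact div_pos (mul_pos (hΓ q) (by linarith)) (hHqq q k)

theorem rate_update_eq (hH : ∀ r q k, 0 ≤ H r q k) (hHqq : ∀ q k, 0 < H q q k)
    (hΓ : ∀ q, 0 < Γ q) {p : Fin Q → Fin N → ℝ} (hp : ∀ r k, 0 ≤ p r k) (q : Fin Q)
    {x : Fin N → ℝ} (hx : ∀ k, 0 ≤ x k) :
    rate H Γ q (Function.update p q x) = (1 / (N : ℝ)) *
      (∑ k, Real.log (insr H Γ q p k + x k) - ∑ k, Real.log (insr H Γ q p k)) := by
  rw [rate, ← Finset.sum_sub_distrib]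
  congr 1
  refine Finset.sum_congr rfl fun k _ => ?_
  have hothers : ∑ r ∈ Finset.univ.erase q, H r q k * Function.update p q x r k
      = ∑ r ∈ Finset.univ.erase q, H r q k * p r k :=
    Finset.sum_congr rfl fun r hr => by rw [Function.update_of_ne (Finset.ne_of_mem_erase hr)]
  have hinsr := insr_pos hH hHqq hΓ hp q k
  rw [Function.update_self, hothers, ← Real.log_div (by linarith [hx k]) hinsr.ne']
  have hd := (div_pos_iff_of_pos_right (hHqq q k)).1 hinsr
  have hh := hHqq q k
  simp only [insr]
  generalize Γ q * (1 + ∑ r ∈ Finset.univ.erase q, H r q k * p r k) = d at hd ⊢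
  congr 1
  field_simp

end Rate

theorem statement3_general {N Q : ℕ} (hN : 1 ≤ N)
    (H : Fin Q → Fin Q → Fin N → ℝ) (Γ : Fin Q → ℝ) (pmax : Fin Q → Fin N → ℝ)
    (hH : ∀ r q k, 0 ≤ H r q k) (hHqq : ∀ q k, 0 < H q q k)
    (hΓ : ∀ q, 0 < Γ q)
    (WF : Fin Q → (Fin Q → Fin N → ℝ) → Fin N → ℝ) (hWF : IsWF H Γ pmax WF)
    (pstar : Fin Q → Fin N → ℝ) (hps : ∀ q, pstar q ∈ stratSet (pmax q)) :
    IsNE H Γ pmax pstar ↔ ∀ q, pstar q = WF q pstar := by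
  have hp r k : 0 ≤ pstar r k := ((hps r).2 k).1
  have hproj q := hWF q pstar fun r _ => hps r
  have hinsr := insr_pos hH hHqq hΓ hp
  have hrate q {x} (hx : x ∈ stratSet (pmax q)) :=
    rate_update_eq hH hHqq hΓ hp q fun k => (hx.2 k).1
  have hrate_self q : rate H Γ q pstar = 1 / (N : ℝ) *
      (∑ k, Real.log (insr H Γ q pstar k + pstar q k) - ∑ k, Real.log (insr H Γ q pstar k)) := by
    rw [← hrate q (hps q), Function.update_eq_self]
  have hN' : (0 : ℝ) < 1 / N := one_div_pos.2 (by exact_mod_cast hN)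
  constructor
  · rintro ⟨-, hNE⟩ q
    by_contra hne
    have hlt := (hproj q).sum_log_add_lt (hinsr q) (hps q) hne
    have hle := hNE q _ (hproj q).1
    rw [hrate q (hproj q).1, hrate_self] at hle
    exact (mul_lt_mul_of_pos_left (sub_lt_sub_right hlt _) hN').not_ge hle
  · refine fun hfix => ⟨hps, fun q y hy => ?_⟩
    have hle := (hfix q ▸ hproj q).sum_log_add_le (hinsr q) hy
    rw [hrate q hy, hrate_self]
    gcongr

/-- A feasible point is a Nash equilibrium of the game iff it is a
simultaneous fixed point of the waterfilling mappings. -/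
theorem statement3 {N Q : ℕ} (hN : 1 ≤ N) (hQ : 2 ≤ Q)
    (H : Fin Q → Fin Q → Fin N → ℝ) (Γ : Fin Q → ℝ) (pmax : Fin Q → Fin N → ℝ)
    (hH : ∀ r q k, 0 ≤ H r q k) (hHqq : ∀ q k, 0 < H q q k)
    (hΓ : ∀ q, 0 < Γ q) (hpmax : ∀ q k, 0 ≤ pmax q k)
    (hcap : ∀ q, 1 < (1 / (N : ℝ)) * ∑ k, pmax q k)
    (WF : Fin Q → (Fin Q → Fin N → ℝ) → Fin N → ℝ) (hWF : IsWF H Γ pmax WF)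
    (pstar : Fin Q → Fin N → ℝ) (hps : ∀ q, pstar q ∈ stratSet (pmax q)) :
    IsNE H Γ pmax pstar ↔ ∀ q, pstar q = WF q pstar :=
  statement3_general hN H Γ pmax hH hHqq hΓ WF hWF pstar hps
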